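/- Let d ≥ 2, α > 0, and n a positive integer, and set r = α·n^(1/d) and h = α·n^((1−d)/(d(d+1))). Then there exists a constant c = c(d) > 0 (independent of α and n) and unit-sphere directions v_1, …, v_m ∈ ∂B_r with m ≥ c·n^((d−1)/(d+1)) such that the ball slices S_{v_1}, …, S_{v_m} are pairwise disjoint. -/

import Mathlib

/-!
A slice `S_v` with `‖v‖ = r` lies in the ball of radius `√(2rh)` around its apex, so slices whose
apexes are `2√(2rh)` apart are disjoint. Such apexes are produced by lifting a cubical grid of
mesh `ε` in the `(d-1)`-ball of radius `r` to the upper hemisphere `x ↦ (x, √(r² - ‖x‖²))`, which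
does not shrink distances; the grid has about `(r / (√(d-1) ε))^(d-1) ≍ (r / h)^((d-1)/2)` points,
and `r / h = n^(2/(d+1))`.
-/

noncomputable section

/-- The ball slice in the open ball `B_r ⊆ ℝ^d` (centered at the origin) with apex `v ∈ ∂B_r`
and height `h`: `S_v = {x ∈ B_r : ⟨x, v⟩ > r(r−h)}`. -/
def ballSlice (d : ℕ) (r h : ℝ) (v : EuclideanSpace ℝ (Fin d)) : Set (EuclideanSpace ℝ (Fin d)) :=
  {x | ‖x‖ < r ∧ r * (r - h) < (inner ℝ x v : ℝ)}

theorem ballSlice_subset_ball {d : ℕ} {r h : ℝ} {v : EuclideanSpace ℝ (Fin d)} (hv : ‖v‖ = r) :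
    ballSlice d r h v ⊆ Metric.ball v √(2 * r * h) := by
  rintro x ⟨hxr, hxv⟩
  have hsq : ‖x - v‖ ^ 2 < 2 * r * h := by
    rw [norm_sub_sq_real, hv]
    nlinarith [norm_nonneg x]
  rw [Metric.mem_ball, dist_eq_norm, ← Real.sqrt_sq (norm_nonneg _)]
  exact Real.sqrt_lt_sqrt (sq_nonneg _) hsq

theorem disjoint_ballSlice_of_le_norm_sub {d : ℕ} {r h : ℝ} {v w : EuclideanSpace ℝ (Fin d)}
    (hv : ‖v‖ = r) (hw : ‖w‖ = r) (hvw : 2 * √(2 * r * h) ≤ ‖v - w‖) :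
    Disjoint (ballSlice d r h v) (ballSlice d r h w) :=
  (Metric.ball_disjoint_ball (by rwa [dist_eq_norm, ← two_mul])).mono
    (ballSlice_subset_ball hv) (ballSlice_subset_ball hw)

theorem EuclideanSpace.norm_le_sqrt_card_mul {ι : Type*} [Fintype ι] {x : EuclideanSpace ℝ ι}
    {c : ℝ} (hc : 0 ≤ c) (hx : ∀ i, |x i| ≤ c) : ‖x‖ ≤ √(Fintype.card ι) * c := by
  rw [EuclideanSpace.norm_eq, ← Real.sqrt_sq hc, ← Real.sqrt_mul (Nat.cast_nonneg _)]
  refine Real.sqrt_le_sqrt ?_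
  calc ∑ i, ‖x i‖ ^ 2 ≤ ∑ _ : ι, c ^ 2 := Finset.sum_le_sum fun i _ => by
        rw [Real.norm_eq_abs]; exact pow_le_pow_left₀ (abs_nonneg _) (hx i) 2
    _ = _ := by simp

def gridPoint {k M : ℕ} (ε : ℝ) (j : Fin k → Fin (M + 1)) : EuclideanSpace ℝ (Fin k) :=
  WithLp.toLp 2 fun i => ε * (j i : ℕ)

theorem norm_gridPoint_le {k M : ℕ} {ε : ℝ} (hε : 0 ≤ ε) (j : Fin k → Fin (M + 1)) :
    ‖gridPoint ε j‖ ≤ √k * (ε * M) := by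
  simpa using EuclideanSpace.norm_le_sqrt_card_mul (x := gridPoint ε j) (by positivity)
    fun i => by
      rw [gridPoint, PiLp.toLp_apply, abs_of_nonneg (by positivity)]
      gcongr
      exact_mod_cast Nat.lt_succ_iff.1 (j i).2

theorem le_norm_gridPoint_sub {k M : ℕ} {ε : ℝ} (hε : 0 ≤ ε) {j j' : Fin k → Fin (M + 1)}
    (h : j ≠ j') : ε ≤ ‖gridPoint ε j - gridPoint ε j'‖ := by
  obtain ⟨i, hi⟩ := Function.ne_iff.1 h
  have hone : (1 : ℝ) ≤ |((j i : ℕ) : ℝ) - (j' i : ℕ)| := by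
    have hne : ((j i : ℕ) : ℤ) - (j' i : ℕ) ≠ 0 :=
      sub_ne_zero.2 (by exact_mod_cast Fin.val_ne_of_ne hi)
    exact_mod_cast Int.one_le_abs hne
  calc ε ≤ ε * |((j i : ℕ) : ℝ) - (j' i : ℕ)| := le_mul_of_one_le_right hε hone
    _ = |(gridPoint ε j - gridPoint ε j') i| := by
        simp [gridPoint, ← mul_sub, abs_mul, abs_of_nonneg hε]
    _ ≤ _ := by simpa using PiLp.norm_apply_le (gridPoint ε j - gridPoint ε j') i

def sphereLift {k : ℕ} (r : ℝ) (y : EuclideanSpace ℝ (Fin k)) : EuclideanSpace ℝ (Fin (k + 1)) :=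
  WithLp.toLp 2 (Fin.snoc (α := fun _ => ℝ) y √(r ^ 2 - ‖y‖ ^ 2))

theorem norm_sphereLift {k : ℕ} {r : ℝ} (hr : 0 ≤ r) {y : EuclideanSpace ℝ (Fin k)}
    (hy : ‖y‖ ≤ r) :
    ‖sphereLift r y‖ = r := by
  have hsq : ‖sphereLift r y‖ ^ 2 = r ^ 2 := by
    rw [EuclideanSpace.real_norm_sq_eq, Fin.sum_univ_castSucc]
    simp only [sphereLift, Fin.snoc_castSucc, Fin.snoc_last]
    rw [← EuclideanSpace.real_norm_sq_eq, Real.sq_sqrt (sub_nonneg.2 (by gcongr)), add_sub_cancel]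
  rwa [sq_eq_sq₀ (norm_nonneg _) hr] at hsq

theorem norm_sub_le_norm_sphereLift_sub {k : ℕ} (r : ℝ) (y z : EuclideanSpace ℝ (Fin k)) :
    ‖y - z‖ ≤ ‖sphereLift r y - sphereLift r z‖ := by
  refine pow_le_pow_iff_left₀ (norm_nonneg _) (norm_nonneg _) two_ne_zero |>.1 ?_
  rw [EuclideanSpace.real_norm_sq_eq, EuclideanSpace.real_norm_sq_eq (sphereLift r y - _),
    Fin.sum_univ_castSucc]
  simp only [sphereLift, PiLp.sub_apply, Fin.snoc_castSucc, Fin.snoc_last]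
  exact le_add_of_nonneg_right (sq_nonneg _)

theorem exists_separated_on_sphere (k : ℕ) {r ε : ℝ} (hr : 0 ≤ r) (hε : 0 < ε) :
    ∃ (m : ℕ) (v : Fin m → EuclideanSpace ℝ (Fin (k + 1))),
      (r / (√k * ε)) ^ k ≤ m ∧ (∀ i, ‖v i‖ = r) ∧ Pairwise fun i j => ε ≤ ‖v i - v j‖ := by
  set t := r / (√k * ε)
  set M := ⌊t⌋₊
  have hgrid : √k * (ε * M) ≤ r := by
    rcases (Real.sqrt_nonneg k).eq_or_lt with hk | hk
    · simpa [← hk] using hr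
    · calc √k * (ε * M) ≤ √k * (ε * t) := by gcongr; exact Nat.floor_le (by positivity)
        _ = r := by rw [← mul_assoc, mul_div_cancel₀ _ (by positivity)]
  let e : Fin ((M + 1) ^ k) ≃ (Fin k → Fin (M + 1)) := (Fintype.equivFinOfCardEq (by simp)).symm
  refine ⟨(M + 1) ^ k, fun i => sphereLift r (gridPoint ε (e i)), ?_, fun i => ?_,
    fun i j hij => ?_⟩
  · push_cast
    exact pow_le_pow_left₀ (by positivity) (Nat.lt_floor_add_one t).le k
  · exact norm_sphereLift hr ((norm_gridPoint_le hε.le _).trans hgrid)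
  · exact (le_norm_gridPoint_sub hε.le (e.injective.ne hij)).trans
      (norm_sub_le_norm_sphereLift_sub r _ _)

theorem exists_pairwise_disjoint_ballSlice (k : ℕ) {r h : ℝ} (hr : 0 < r) (hh : 0 < h) :
    ∃ (m : ℕ) (v : Fin m → EuclideanSpace ℝ (Fin (k + 1))),
      (r / (8 * k * h)) ^ ((k : ℝ) / 2) ≤ m ∧ (∀ i, ‖v i‖ = r) ∧
      Pairwise fun i j => Disjoint (ballSlice (k + 1) r h (v i)) (ballSlice (k + 1) r h (v j)) := by
  obtain ⟨m, v, hm, hv, hsep⟩ :=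
    exists_separated_on_sphere k hr.le (ε := 2 * √(2 * r * h)) (by positivity)
  refine ⟨m, v, ?_, hv, fun i j hij =>
    disjoint_ballSlice_of_le_norm_sub (hv i) (hv j) (hsep hij)⟩
  set x := r / (√k * (2 * √(2 * r * h)))
  have hx : r / (8 * k * h) = x ^ 2 := by
    rw [div_pow, mul_pow, mul_pow, Real.sq_sqrt (by positivity), Real.sq_sqrt (by positivity),
      sq, ← mul_div_mul_left r (8 * k * h) hr.ne']
    ring_nf
  rwa [hx, ← Real.rpow_natCast, ← Real.rpow_mul (by positivity), Nat.cast_ofNat,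
    mul_div_cancel₀ _ two_ne_zero, Real.rpow_natCast]

theorem stmt3 (d : ℕ) (hd : 2 ≤ d) :
    ∃ c : ℝ, 0 < c ∧
      ∀ α : ℝ, 0 < α → ∀ n : ℕ, 0 < n →
        ∃ (m : ℕ) (v : Fin m → EuclideanSpace ℝ (Fin d)),
          c * (n : ℝ) ^ (((d : ℝ) - 1) / ((d : ℝ) + 1)) ≤ (m : ℝ) ∧
          (∀ i : Fin m, ‖v i‖ = α * (n : ℝ) ^ ((1 : ℝ) / d)) ∧
          ∀ i j : Fin m, i ≠ j →
            Disjoint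
              (ballSlice d (α * (n : ℝ) ^ ((1 : ℝ) / d))
                (α * (n : ℝ) ^ (((1 : ℝ) - d) / ((d : ℝ) * ((d : ℝ) + 1)))) (v i))
              (ballSlice d (α * (n : ℝ) ^ ((1 : ℝ) / d))
                (α * (n : ℝ) ^ (((1 : ℝ) - d) / ((d : ℝ) * ((d : ℝ) + 1)))) (v j)) := by
  obtain ⟨k, rfl⟩ : ∃ k, d = k + 1 := ⟨d - 1, by omega⟩
  have hk : (0 : ℝ) < k := by norm_cast; omega
  refine ⟨((8 * k : ℝ) ^ ((k : ℝ) / 2))⁻¹, by positivity, fun α hα n hn => ?_⟩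
  have hn : (0 : ℝ) < n := by exact_mod_cast hn
  set r := α * (n : ℝ) ^ ((1 : ℝ) / (k + 1 : ℕ))
  set h := α * (n : ℝ) ^ (((1 : ℝ) - (k + 1 : ℕ)) / (((k + 1 : ℕ) : ℝ) * (((k + 1 : ℕ) : ℝ) + 1)))
  have hratio : r / (8 * k * h) = (n : ℝ) ^ ((2 : ℝ) / (k + 2)) / (8 * k) := by
    rw [show r / (8 * k * h) = r / h / (8 * k) by ring, mul_div_mul_left _ _ hα.ne',
      ← Real.rpow_sub hn]
    congr 2
    push_cast
    field_simp
    ring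
  obtain ⟨m, v, hm, hv, hdisj⟩ := exists_pairwise_disjoint_ballSlice k
    (r := r) (h := h) (by positivity) (by positivity)
  refine ⟨m, v, le_of_eq_of_le ?_ hm, hv, fun i j hij => hdisj hij⟩
  rw [hratio, Real.div_rpow (by positivity) (by positivity), ← Real.rpow_mul hn.le,
    inv_mul_eq_div]
  congr 2
  push_cast
  field_simp
  ring
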